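/- arXiv:2501.06647 — 3 statements merged into one kernel-verified Lean document; each statement's English description precedes it below -/
import Mathlib

section
/- In a stream segment tree of height h ≥ 1 over an interval, for every query subinterval [Ts, Te) of the root's interval, there exists a hit set (a set of tree nodes whose associated intervals are pairwise disjoint and whose union equals [Ts, Te)) of size at most max(2(h−1), 1). -/
/-!
STATEMENT 0: In a stream segment tree of height h ≥ 1 over an interval, for every
query subinterval [Ts, Te) of the root's interval, there exists a hit set (a set of
tree nodes whose associated intervals are pairwise disjoint and whose union equals
[Ts, Te)) of size at most max(2(h−1), 1).

A segment tree over [a, b) is a binary tree where leaves carry unit intervals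
[t, t+1) and every internal node's interval is the disjoint adjoint union of its
two children's intervals.  Nodes are identified with their intervals (distinct
nodes carry distinct intervals).
-/

inductive SegTree : ℕ → ℕ → Type
  | leaf (t : ℕ) : SegTree t (t + 1)
  | node {a m b : ℕ} (l : SegTree a m) (r : SegTree m b) : SegTree a b

/-- Height: the maximum number of nodes on a root-to-leaf path. -/
def SegTree.height : ∀ {a b : ℕ}, SegTree a b → ℕ
  | _, _, .leaf _ => 1
  | _, _, .node l r => max l.height r.height + 1

/-- The set of intervals of the nodes of the tree. -/
def SegTree.intervals : ∀ {a b : ℕ}, SegTree a b → Finset (ℕ × ℕ)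
  | _, _, .leaf t => {(t, t + 1)}
  | a, b, .node l r => insert (a, b) (l.intervals ∪ r.intervals)

/-- A hit set for the query `[Ts, Te)`: a set of nodes of the tree whose intervals
are pairwise disjoint and whose union is `[Ts, Te)`. -/
def SegTree.IsHitSet {a b : ℕ} (t : SegTree a b) (Ts Te : ℕ)
    (S : Finset (ℕ × ℕ)) : Prop :=
  (∀ I ∈ S, I ∈ t.intervals) ∧
  (∀ I ∈ S, ∀ J ∈ S, I ≠ J →
    Disjoint (Finset.Ico I.1 I.2) (Finset.Ico J.1 J.2)) ∧
  S.biUnion (fun I => Finset.Ico I.1 I.2) = Finset.Ico Ts Te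

lemma SegTree.self_mem_intervals : ∀ {a b : ℕ} (t : SegTree a b), (a, b) ∈ t.intervals
  | _, _, .leaf t => by simp [SegTree.intervals]
  | _, _, .node l r => by simp [SegTree.intervals]

lemma SegTree.lt_of_tree : ∀ {a b : ℕ}, SegTree a b → a < b
  | _, _, .leaf t => Nat.lt_succ_self t
  | _, _, .node l r => lt_trans l.lt_of_tree r.lt_of_tree

lemma SegTree.one_le_height : ∀ {a b : ℕ} (t : SegTree a b), 1 ≤ t.height
  | _, _, .leaf t => le_refl _
  | _, _, .node l r => by simp [SegTree.height]

lemma SegTree.full_hit {a b : ℕ} (t : SegTree a b) : t.IsHitSet a b {(a, b)} := by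
  refine ⟨?_, ?_, ?_⟩
  · intro I hI; simp at hI; subst hI; exact t.self_mem_intervals
  · intro I hI J hJ hne; simp at hI hJ; subst hI; subst hJ; exact absurd rfl hne
  · simp

lemma SegTree.hit_lift_left {a m b : ℕ} (l : SegTree a m) (r : SegTree m b)
    {Ts Te : ℕ} {S : Finset (ℕ × ℕ)} (h : l.IsHitSet Ts Te S) :
    (SegTree.node l r).IsHitSet Ts Te S := by
  obtain ⟨h1, h2, h3⟩ := h
  exact ⟨fun I hI => by simp [SegTree.intervals]; tauto, h2, h3⟩

lemma SegTree.hit_lift_right {a m b : ℕ} (l : SegTree a m) (r : SegTree m b)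
    {Ts Te : ℕ} {S : Finset (ℕ × ℕ)} (h : r.IsHitSet Ts Te S) :
    (SegTree.node l r).IsHitSet Ts Te S := by
  obtain ⟨h1, h2, h3⟩ := h
  exact ⟨fun I hI => by simp [SegTree.intervals]; tauto, h2, h3⟩

lemma SegTree.hit_union {a m b : ℕ} (l : SegTree a m) (r : SegTree m b)
    {Ts Te : ℕ} {S₁ S₂ : Finset (ℕ × ℕ)}
    (h₁ : l.IsHitSet Ts m S₁) (h₂ : r.IsHitSet m Te S₂)
    (hTs : Ts ≤ m) (hTe : m ≤ Te) :
    (SegTree.node l r).IsHitSet Ts Te (S₁ ∪ S₂) := by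
  obtain ⟨m1, d1, u1⟩ := h₁
  obtain ⟨m2, d2, u2⟩ := h₂
  have sub1 : ∀ I ∈ S₁, Finset.Ico I.1 I.2 ⊆ Finset.Ico Ts m := by
    intro I hI; rw [← u1]
    exact Finset.subset_biUnion_of_mem (fun I => Finset.Ico I.1 I.2) hI
  have sub2 : ∀ I ∈ S₂, Finset.Ico I.1 I.2 ⊆ Finset.Ico m Te := by
    intro I hI; rw [← u2]
    exact Finset.subset_biUnion_of_mem (fun I => Finset.Ico I.1 I.2) hI
  have hdis : Disjoint (Finset.Ico Ts m) (Finset.Ico m Te) :=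
    Finset.Ico_disjoint_Ico_consecutive Ts m Te
  refine ⟨?_, ?_, ?_⟩
  · intro I hI
    rcases Finset.mem_union.mp hI with h | h
    · simp [SegTree.intervals]; right; left; exact m1 I h
    · simp [SegTree.intervals]; right; right; exact m2 I h
  · intro I hI J hJ hne
    rcases Finset.mem_union.mp hI with hI | hI <;> rcases Finset.mem_union.mp hJ with hJ | hJ
    · exact d1 I hI J hJ hne
    · exact hdis.mono (sub1 I hI) (sub2 J hJ)
    · exact (hdis.mono (sub1 J hJ) (sub2 I hI)).symm
    · exact d2 I hI J hJ hne
  · have hbu : (S₁ ∪ S₂).biUnion (fun I => Finset.Ico I.1 I.2)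
        = S₁.biUnion (fun I => Finset.Ico I.1 I.2) ∪ S₂.biUnion (fun I => Finset.Ico I.1 I.2) := by
      ext x
      simp only [Finset.mem_biUnion, Finset.mem_union]
      constructor
      · rintro ⟨I, hI | hI, hx⟩
        exacts [Or.inl ⟨I, hI, hx⟩, Or.inr ⟨I, hI, hx⟩]
      · rintro (⟨I, hI, hx⟩ | ⟨I, hI, hx⟩)
        exacts [⟨I, Or.inl hI, hx⟩, ⟨I, Or.inr hI, hx⟩]
    rw [hbu, u1, u2, Finset.Ico_union_Ico_eq_Ico hTs hTe]

/-- Suffix covers: `[Ts, b)` with at most `height` nodes. -/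
lemma SegTree.suffix_hit : ∀ {a b : ℕ} (t : SegTree a b) (Ts : ℕ), a ≤ Ts → Ts < b →
    ∃ S, t.IsHitSet Ts b S ∧ S.card ≤ t.height
  | _, _, .leaf t0, Ts, h1, h2 => by
    have : Ts = t0 := by omega
    subst this
    exact ⟨{(Ts, Ts + 1)}, (SegTree.leaf Ts).full_hit, by simp [SegTree.height]⟩
  | a, b, .node (m := m) l r, Ts, h1, h2 => by
    rcases le_or_gt m Ts with hm | hm
    · obtain ⟨S, hS, hc⟩ := r.suffix_hit Ts hm h2
      exact ⟨S, SegTree.hit_lift_right l r hS,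
        le_trans hc (by
          have := le_max_right l.height r.height
          simp only [SegTree.height]; omega)⟩
    · obtain ⟨S, hS, hc⟩ := l.suffix_hit Ts h1 hm
      refine ⟨S ∪ {(m, b)}, SegTree.hit_union l r hS r.full_hit (le_of_lt hm)
        (by have := r.lt_of_tree; omega), ?_⟩
      calc (S ∪ {(m, b)}).card ≤ S.card + 1 := by
              simpa using Finset.card_union_le S {(m, b)}
        _ ≤ (SegTree.node l r).height := by
              have := le_max_left l.height r.height
              simp only [SegTree.height]; omega
termination_by a b t => sizeOf t

/-- Prefix covers: `[a, Te)` with at most `height` nodes. -/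
lemma SegTree.prefix_hit : ∀ {a b : ℕ} (t : SegTree a b) (Te : ℕ), a < Te → Te ≤ b →
    ∃ S, t.IsHitSet a Te S ∧ S.card ≤ t.height
  | _, _, .leaf t0, Te, h1, h2 => by
    have : Te = t0 + 1 := by omega
    subst this
    exact ⟨{(t0, t0 + 1)}, (SegTree.leaf t0).full_hit, by simp [SegTree.height]⟩
  | a, b, .node (m := m) l r, Te, h1, h2 => by
    rcases le_or_gt Te m with hm | hm
    · obtain ⟨S, hS, hc⟩ := l.prefix_hit Te h1 hm
      exact ⟨S, SegTree.hit_lift_left l r hS,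
        le_trans hc (by
          have := le_max_left l.height r.height
          simp only [SegTree.height]; omega)⟩
    · obtain ⟨S, hS, hc⟩ := r.prefix_hit Te hm h2
      refine ⟨{(a, m)} ∪ S, SegTree.hit_union l r l.full_hit hS
        (by have := l.lt_of_tree; omega) (le_of_lt hm), ?_⟩
      calc ({(a, m)} ∪ S).card ≤ 1 + S.card := by
              simpa using Finset.card_union_le {(a, m)} S
        _ ≤ (SegTree.node l r).height := by
              have := le_max_right l.height r.height
              simp only [SegTree.height]; omega
termination_by a b t => sizeOf t

theorem stmt_0 {a b : ℕ} (t : SegTree a b) (hh : 1 ≤ t.height)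
    (Ts Te : ℕ) (hTs : a ≤ Ts) (hTsTe : Ts < Te) (hTe : Te ≤ b) :
    ∃ S : Finset (ℕ × ℕ), t.IsHitSet Ts Te S ∧
      S.card ≤ max (2 * (t.height - 1)) 1 := by
  clear hh
  induction t with
  | leaf t0 =>
    have h1 : Ts = t0 := by omega
    have h2 : Te = t0 + 1 := by omega
    subst h1; subst h2
    exact ⟨{(Ts, Ts + 1)}, (SegTree.leaf Ts).full_hit, by simp⟩
  | @node a m b l r ihl ihr =>
    have hl1 := l.one_le_height
    have hr1 := r.one_le_height
    have hbound : max (2 * ((SegTree.node l r).height - 1)) 1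
        = 2 * max l.height r.height := by
      simp [SegTree.height]; omega
    rcases le_or_gt Te m with hm | hm
    · obtain ⟨S, hS, hc⟩ := ihl hTs hm
      refine ⟨S, SegTree.hit_lift_left l r hS, ?_⟩
      rw [hbound]; calc S.card ≤ max (2 * (l.height - 1)) 1 := hc
        _ ≤ 2 * max l.height r.height := by omega
    · rcases le_or_gt m Ts with hm' | hm'
      · obtain ⟨S, hS, hc⟩ := ihr hm' hTe
        refine ⟨S, SegTree.hit_lift_right l r hS, ?_⟩
        rw [hbound]; calc S.card ≤ max (2 * (r.height - 1)) 1 := hc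
          _ ≤ 2 * max l.height r.height := by omega
      · obtain ⟨S₁, hS₁, hc₁⟩ := l.suffix_hit Ts hTs hm'
        obtain ⟨S₂, hS₂, hc₂⟩ := r.prefix_hit Te hm hTe
        refine ⟨S₁ ∪ S₂, SegTree.hit_union l r hS₁ hS₂ (le_of_lt hm') (le_of_lt hm), ?_⟩
        rw [hbound]
        calc (S₁ ∪ S₂).card ≤ S₁.card + S₂.card := Finset.card_union_le _ _
          _ ≤ 2 * max l.height r.height := by omega
end

section
/- For any node v of a stream segment tree built by the append algorithm after T slices have been appended, the number of additional leaves that can still be inserted into the subtree rooted at v equals max(τ_v − T, 0). -/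
/-- A stream segment tree: leaves carry unit intervals; a `node` (intermediate
node) has two children with adjoint intervals; a `pnode` is a placeholder node
whose interval [a, b) is only partially observed, having only a (left) child
over [a, m) with m < b. -/
inductive StreamTree : ℕ → ℕ → Type
  | leaf (t : ℕ) : StreamTree t (t + 1)
  | node {a m b : ℕ} (l : StreamTree a m) (r : StreamTree m b) : StreamTree a b
  | pnode {a m b : ℕ} (hmb : m < b) (l : StreamTree a m) : StreamTree a b

/-- Number of leaves in the (sub)tree. -/
def StreamTree.leafCount : ∀ {a b : ℕ}, StreamTree a b → ℕ
  | _, _, .leaf _ => 1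
  | _, _, .node l r => l.leafCount + r.leafCount
  | _, _, .pnode _ l => l.leafCount

/-- Height: the maximum number of nodes on a root-to-leaf path. -/
def StreamTree.height : ∀ {a b : ℕ}, StreamTree a b → ℕ
  | _, _, .leaf _ => 1
  | _, _, .node l r => max l.height r.height + 1
  | _, _, .pnode _ l => l.height + 1

/-- Well-formedness of a stream segment tree after the slices `0, …, T-1`
have been appended: every leaf is an observed time slice; a two-child
(intermediate-or-placeholder) node has its left child fully observed; a
one-child placeholder node has its right part entirely unobserved. -/
def StreamTree.IsStreamAt : ∀ {a b : ℕ}, StreamTree a b → ℕ → Prop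
  | _, _, .leaf t, T => t < T
  | _, _, @StreamTree.node _ m _ l r, T => m ≤ T ∧ l.IsStreamAt T ∧ r.IsStreamAt T
  | _, _, @StreamTree.pnode _ m _ _ l, T => T ≤ m ∧ l.IsStreamAt T

theorem stmt_3 {a b : ℕ} (v : StreamTree a b) (T : ℕ) (hv : v.IsStreamAt T) :
    ((b : ℤ) - (a : ℤ)) - (v.leafCount : ℤ) = max ((b : ℤ) - (T : ℤ)) 0 := by
  induction v with
  | leaf t =>
    simp only [StreamTree.IsStreamAt] at hv
    simp [StreamTree.leafCount]
    omega
  | node l r ihl ihr =>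
    obtain ⟨hmT, hl, hr⟩ := hv
    have h1 := ihl hl
    have h2 := ihr hr
    simp only [StreamTree.leafCount]
    push_cast
    omega
  | pnode hmb l ih =>
    obtain ⟨hTm, hl⟩ := hv
    have h1 := ih hl
    simp only [StreamTree.leafCount]
    omega
end

section
/- Error bound for stitching: let X be the concatenation along the temporal mode of subtensors X^(1), …, X^(s), and suppose X = W + E where W has multilinear (Tucker) rank at most r and ‖E‖_F ≤ ε‖X‖_F. If Y^(i) is a best rank-r Tucker approximation of X^(i) for each i, and Y is a best rank-r Tucker approximation of the concatenation Ỹ of the Y^(i), then ‖X − Y‖_F ≤ 3ε‖X‖_F. -/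
/-!
A p-way tensor (p = q + 1) with a distinguished first (temporal) mode is
represented through its mode-1 matricization: a matrix whose rows are indexed
by the mode-1 index (a type α, usually `Fin D₁`) and whose columns are indexed
by the multi-indices `(i : Fin q) → Fin (D i)` of the remaining modes.
-/

/-- The Tucker product  H ×₁ V₁ ×₂ V 0 ⋯ ×_p V (q-1)  of a core tensor `H`
with factor matrices `V₁` (temporal mode) and `V i` (non-temporal modes),
expressed in mode-1 matricized form.  This multilinear formula is exactly the
composition of the mode-n products mat_n(H ×_n U) = U · mat_n(H). -/
noncomputable def tucker {α : Type*} {r₁ q : ℕ} {r D : Fin q → ℕ}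
    (H : Matrix (Fin r₁) (∀ i, Fin (r i)) ℝ)
    (V₁ : Matrix α (Fin r₁) ℝ)
    (V : ∀ i, Matrix (Fin (D i)) (Fin (r i)) ℝ) :
    Matrix α (∀ i, Fin (D i)) ℝ :=
  Matrix.of fun d idx => ∑ j₁ : Fin r₁, ∑ j : ∀ i, Fin (r i),
    V₁ d j₁ * H j₁ j * ∏ i, V i (idx i) (j i)

/-- Frobenius norm: the square root of the sum of the squares of all entries. -/
noncomputable def frob {α β : Type*} [Fintype α] [Fintype β]
    (M : Matrix α β ℝ) : ℝ :=
  Real.sqrt (∑ i, ∑ j, (M i j) ^ 2)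

/-- Concatenation of tensors X^(1), …, X^(s) along the first (temporal) mode:
the temporal indices of the blocks are stacked into a sigma type. -/
def concatTemporal {s : ℕ} {L : Fin s → ℕ} {β : Type*}
    (X : ∀ i, Matrix (Fin (L i)) β ℝ) :
    Matrix ((i : Fin s) × Fin (L i)) β ℝ :=
  Matrix.of fun p idx => X p.1 p.2 idx

/-- Tucker (multilinear) rank at most `rk`: the tensor is expressible as a Tucker
product G ×₁ U^(1) ⋯ ×_p U^(p) whose core G has size at most `rk` in every mode. -/
def TuckerRankLe {α : Type*} {q : ℕ} {D : Fin q → ℕ} (rk : ℕ)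
    (X : Matrix α (∀ i, Fin (D i)) ℝ) : Prop :=
  ∃ (r₁ : ℕ) (r : Fin q → ℕ) (H : Matrix (Fin r₁) (∀ i, Fin (r i)) ℝ)
    (V₁ : Matrix α (Fin r₁) ℝ) (V : ∀ i, Matrix (Fin (D i)) (Fin (r i)) ℝ),
    r₁ ≤ rk ∧ (∀ i, r i ≤ rk) ∧ X = tucker H V₁ V

/-- `Y` is a best rank-`rk` Tucker approximation of `Z`: it has Tucker rank ≤ rk
and minimizes the Frobenius distance to `Z` among such tensors. -/
def IsBestTuckerApprox {α : Type*} [Fintype α] {q : ℕ} {D : Fin q → ℕ} (rk : ℕ)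
    (Z Y : Matrix α (∀ i, Fin (D i)) ℝ) : Prop :=
  TuckerRankLe rk Y ∧
  ∀ Y' : Matrix α (∀ i, Fin (D i)) ℝ, TuckerRankLe rk Y' →
    frob (Z - Y) ≤ frob (Z - Y')

/-!
STATEMENT 10: Error bound for stitching: let X be the concatenation along the
temporal mode of subtensors X^(1), …, X^(s), and suppose X = W + E where W has
Tucker rank at most r and ‖E‖_F ≤ ε‖X‖_F.  If Y^(i) is a best rank-r Tucker
approximation of X^(i) for each i, and Y is a best rank-r Tucker approximation
of the concatenation Ỹ of the Y^(i), then ‖X − Y‖_F ≤ 3ε‖X‖_F.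
-/


noncomputable def frobE {α β : Type*} [Fintype α] [Fintype β]
    (M : Matrix α β ℝ) : EuclideanSpace ℝ (α × β) :=
  WithLp.toLp 2 (fun p : α × β => M p.1 p.2)

lemma frob_eq_norm {α β : Type*} [Fintype α] [Fintype β]
    (M : Matrix α β ℝ) : frob M = ‖frobE M‖ := by
  rw [EuclideanSpace.norm_eq, frob]
  congr 1
  rw [Fintype.sum_prod_type]
  exact Finset.sum_congr rfl fun a _ => Finset.sum_congr rfl fun b _ => by
    simp [frobE, Real.norm_eq_abs, sq_abs]

lemma frob_nonneg {α β : Type*} [Fintype α] [Fintype β]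
    (M : Matrix α β ℝ) : 0 ≤ frob M := Real.sqrt_nonneg _

lemma frobE_sub {α β : Type*} [Fintype α] [Fintype β]
    (A B : Matrix α β ℝ) : frobE (A - B) = frobE A - frobE B := rfl

lemma frob_sub_comm {α β : Type*} [Fintype α] [Fintype β]
    (A B : Matrix α β ℝ) : frob (A - B) = frob (B - A) := by
  rw [frob_eq_norm, frob_eq_norm, frobE_sub, frobE_sub, norm_sub_rev]

lemma frob_triangle {α β : Type*} [Fintype α] [Fintype β]
    (A B C : Matrix α β ℝ) : frob (A - C) ≤ frob (A - B) + frob (B - C) := by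
  rw [frob_eq_norm, frob_eq_norm, frob_eq_norm, frobE_sub, frobE_sub, frobE_sub]
  exact norm_sub_le_norm_sub_add_norm_sub _ _ _

/-- Block `i` of a tensor whose temporal mode is a sigma type. -/
def blk {s : ℕ} {L : Fin s → ℕ} {β : Type*}
    (M : Matrix ((i : Fin s) × Fin (L i)) β ℝ) (i : Fin s) :
    Matrix (Fin (L i)) β ℝ :=
  Matrix.of fun t idx => M ⟨i, t⟩ idx

lemma frob_sq {α β : Type*} [Fintype α] [Fintype β]
    (M : Matrix α β ℝ) : (frob M) ^ 2 = ∑ i, ∑ j, (M i j) ^ 2 := by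
  rw [frob, Real.sq_sqrt]
  positivity

lemma frob_le_of_blocks {s : ℕ} {L : Fin s → ℕ} {β : Type*} [Fintype β]
    (M N : Matrix ((i : Fin s) × Fin (L i)) β ℝ)
    (h : ∀ i, frob (blk M i) ≤ frob (blk N i)) : frob M ≤ frob N := by
  unfold frob
  apply Real.sqrt_le_sqrt
  rw [← Finset.univ_sigma_univ, Finset.sum_sigma, Finset.sum_sigma]
  apply Finset.sum_le_sum
  intro i _
  have hM : ∑ t, ∑ j, (M ⟨i, t⟩ j) ^ 2 = (frob (blk M i)) ^ 2 := (frob_sq _).symm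
  have hN : ∑ t, ∑ j, (N ⟨i, t⟩ j) ^ 2 = (frob (blk N i)) ^ 2 := (frob_sq _).symm
  rw [hM, hN]
  exact pow_le_pow_left₀ (frob_nonneg _) (h i) 2

lemma blk_tuckerRankLe {s q : ℕ} {L : Fin s → ℕ} {D : Fin q → ℕ} {rk : ℕ}
    {W : Matrix ((i : Fin s) × Fin (L i)) (∀ j, Fin (D j)) ℝ}
    (hW : TuckerRankLe rk W) (i : Fin s) : TuckerRankLe rk (blk W i) := by
  obtain ⟨r₁, r, H, V₁, V, h1, h2, h3⟩ := hW
  exact ⟨r₁, r, H, Matrix.of fun t j => V₁ ⟨i, t⟩ j, V, h1, h2, by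
    subst h3; ext t idx; rfl⟩

theorem stmt_10 {s q : ℕ} {L : Fin s → ℕ} {D : Fin q → ℕ} (rk : ℕ) (ε : ℝ)
    (X Y : ∀ i : Fin s, Matrix (Fin (L i)) (∀ j, Fin (D j)) ℝ)
    (W E Yfin : Matrix ((i : Fin s) × Fin (L i)) (∀ j, Fin (D j)) ℝ)
    (hXWE : concatTemporal X = W + E)
    (hW : TuckerRankLe rk W)
    (hE : frob E ≤ ε * frob (concatTemporal X))
    (hY : ∀ i, IsBestTuckerApprox rk (X i) (Y i))
    (hYfin : IsBestTuckerApprox rk (concatTemporal Y) Yfin) :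
    frob (concatTemporal X - Yfin) ≤ 3 * ε * frob (concatTemporal X) := by
  set Xc := concatTemporal X with hXc
  set Yc := concatTemporal Y with hYc
  have hE' : E = Xc - W := by rw [hXWE, add_sub_cancel_left]
  have hblkE : ∀ i, blk E i = X i - blk W i := by
    intro i; ext t idx; simp [blk, hE', hXc, concatTemporal, Matrix.sub_apply]
  have h1 : frob (Xc - Yc) ≤ frob E := by
    apply frob_le_of_blocks
    intro i
    have hb1 : blk (Xc - Yc) i = X i - Y i := by
      ext t idx; simp [blk, hXc, hYc, concatTemporal, Matrix.sub_apply]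
    rw [hb1, hblkE i]
    exact (hY i).2 _ (blk_tuckerRankLe hW i)
  have h2 : frob (Yc - Yfin) ≤ frob (Yc - Xc) + frob E := by
    calc frob (Yc - Yfin) ≤ frob (Yc - W) := hYfin.2 _ hW
      _ ≤ frob (Yc - Xc) + frob (Xc - W) := frob_triangle _ _ _
      _ = frob (Yc - Xc) + frob E := by rw [hE']
  have h3 : frob (Yc - Xc) = frob (Xc - Yc) := frob_sub_comm _ _
  have hεX : frob E ≤ ε * frob Xc := hE
  calc frob (Xc - Yfin) ≤ frob (Xc - Yc) + frob (Yc - Yfin) := frob_triangle _ _ _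
    _ ≤ frob E + (frob (Yc - Xc) + frob E) := by linarith
    _ ≤ frob E + (frob E + frob E) := by rw [h3]; linarith
    _ ≤ 3 * ε * frob Xc := by linarith
end
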